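/- For all μ, μ̂ ∈ 𝒫(X), ‖H(μ) − H(μ̂)‖₁ ≤ K_H ‖μ − μ̂‖₁, where K_H := (3K1/2)(1 + K_{H1}/ρ); in particular, if K_H < 1 (Assumption 2), the mean-field equilibrium operator H is a contraction on (𝒫(X), ‖·‖₁) with contraction constant K_H. (Proposition 4.) -/

import Mathlib

/-!
The optimal value `V_μ` solves `V_μ(x) = max_u (q_μ(x,·)·u - Ω u)` with action values
`q_μ(x,a) = r(x,a,μ) + β ∑ y, V_μ y p(y|x,a,μ)`, and this regularized maximum is 1-Lipschitz in
`q` for the sup norm. Against a vector `V` of span `S`, a kernel moving by `K` in `l1` moves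
`∑ V p` by at most `K S / 2`; hence `span V_μ ≤ L1 + β K1 / 2 · span V_μ`, i.e.
`span V_μ ≤ Q_Lip`, and then `‖V_μ - V_μ'‖∞ ≤ Q_Lip ‖μ - μ'‖₁ + β ‖V_μ - V_μ'‖∞`, so that
`q_μ(x,·)` and `q_μ'(x',·)` differ by at most `K_H1 (1_{x≠x'} + ‖μ - μ'‖₁)`. Strong convexity of
`Ω` makes the maximizer `(1/ρ)`-Lipschitz in `q`, so the state kernels under the optimal
policies differ by at most `K1 (1 + K_H1/ρ)(1_{x≠x'} + ‖μ - μ'‖₁)`. Finally, coupling `μ` with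
`μ'` by leaving the common mass `min μ μ'` in place and transporting the remaining mass
`‖μ - μ'‖₁ / 2` produces the factor `3/2`.
-/

namespace MFG

open Finset

def IsProb {E : Type*} [Fintype E] (μ : E → ℝ) : Prop :=
  (∀ e, 0 ≤ μ e) ∧ ∑ e, μ e = 1

def l1 {E : Type*} [Fintype E] (μ ν : E → ℝ) : ℝ :=
  ∑ e, |μ e - ν e|

def ind {E : Type*} [DecidableEq E] (x y : E) : ℝ :=
  if x = y then 0 else 1

def RewardLip {X A : Type*} [Fintype X] [Fintype A] [DecidableEq X] [DecidableEq A]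
    (r : X → A → (X → ℝ) → ℝ) (L1 : ℝ) : Prop :=
  ∀ x x' a a' μ μ', IsProb μ → IsProb μ' →
    |r x a μ - r x' a' μ'| ≤ L1 * (ind x x' + 2 * ind a a' + l1 μ μ')

def KernelLip {X A : Type*} [Fintype X] [Fintype A] [DecidableEq X] [DecidableEq A]
    (p : X → A → (X → ℝ) → X → ℝ) (K1 : ℝ) : Prop :=
  ∀ x x' a a' μ μ', IsProb μ → IsProb μ' →
    l1 (p x a μ) (p x' a' μ') ≤ K1 * (ind x x' + 2 * ind a a' + l1 μ μ')

def IsKernel {X A : Type*} [Fintype X] [Fintype A]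
    (p : X → A → (X → ℝ) → X → ℝ) : Prop :=
  ∀ x a μ, IsProb μ → IsProb (p x a μ)

def RewardNonneg {X A : Type*} [Fintype X] [Fintype A]
    (r : X → A → (X → ℝ) → ℝ) : Prop :=
  ∀ x a μ, IsProb μ → 0 ≤ r x a μ

def OmegaLip {A : Type*} [Fintype A] (Ω : (A → ℝ) → ℝ) (Lreg : ℝ) : Prop :=
  ∀ u v, IsProb u → IsProb v → |Ω u - Ω v| ≤ Lreg * l1 u v

def StrongConvex {A : Type*} [Fintype A] (Ω : (A → ℝ) → ℝ)
    (DΩ : (A → ℝ) → (A → ℝ)) (ρ : ℝ) : Prop :=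
  ∀ u v, IsProb u → IsProb v →
    Ω u + (∑ a, DΩ u a * (v a - u a)) + ρ / 2 * (l1 u v) ^ 2 ≤ Ω v

noncomputable def Tbell {X A : Type*} [Fintype X] [Fintype A]
    (r : X → A → (X → ℝ) → ℝ) (p : X → A → (X → ℝ) → X → ℝ)
    (Ω : (A → ℝ) → ℝ) (β : ℝ) (μ : X → ℝ) (v : X → ℝ) (x : X) : ℝ :=
  ⨆ u : {w : A → ℝ // IsProb w},
    ((∑ a, r x a μ * u.1 a) - Ω u.1 + β * ∑ y, v y * (∑ a, p x a μ y * u.1 a))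

noncomputable def Qmax {X A : Type*} [Fintype A] (Q : X → (A → ℝ) → ℝ) (y : X) : ℝ :=
  ⨆ u : {w : A → ℝ // IsProb w}, Q y u.1

noncomputable def Lbell {X A : Type*} [Fintype X] [Fintype A]
    (r : X → A → (X → ℝ) → ℝ) (p : X → A → (X → ℝ) → X → ℝ)
    (Ω : (A → ℝ) → ℝ) (β : ℝ) (μ : X → ℝ) (Q : X → (A → ℝ) → ℝ)
    (x : X) (u : A → ℝ) : ℝ :=
  (∑ a, r x a μ * u a) - Ω u + β * ∑ y, Qmax Q y * (∑ a, p x a μ y * u a)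

def BddFixedPoint {X A : Type*} [Fintype X] [Fintype A]
    (r : X → A → (X → ℝ) → ℝ) (p : X → A → (X → ℝ) → X → ℝ)
    (Ω : (A → ℝ) → ℝ) (β : ℝ) (μ : X → ℝ) (Q : X → (A → ℝ) → ℝ) : Prop :=
  (∃ C, ∀ x u, IsProb u → |Q x u| ≤ C) ∧
  (∀ x u, IsProb u → Q x u = Lbell r p Ω β μ Q x u)

lemma l1_nonneg {E : Type*} [Fintype E] (μ ν : E → ℝ) : 0 ≤ l1 μ ν :=
  sum_nonneg fun _ _ => abs_nonneg _

lemma l1_comm {E : Type*} [Fintype E] (μ ν : E → ℝ) : l1 μ ν = l1 ν μ :=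
  sum_congr rfl fun _ _ => abs_sub_comm _ _

@[simp]
lemma l1_self {E : Type*} [Fintype E] (μ : E → ℝ) : l1 μ μ = 0 := by
  simp [l1]

lemma ind_nonneg {E : Type*} [DecidableEq E] (x y : E) : 0 ≤ ind x y := by
  unfold ind; split <;> norm_num

lemma ind_le_one {E : Type*} [DecidableEq E] (x y : E) : ind x y ≤ 1 := by
  unfold ind; split <;> norm_num

@[simp]
lemma ind_self {E : Type*} [DecidableEq E] (x : E) : ind x x = 0 := by
  simp [ind]

lemma IsProb.nonempty {E : Type*} [Fintype E] {μ : E → ℝ} (hμ : IsProb μ) : Nonempty E := by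
  by_contra h
  have := hμ.2
  simp [not_nonempty_iff.1 h] at this

lemma IsProb.sum_sub_min {E : Type*} [Fintype E] {μ μ' : E → ℝ} (hμ : IsProb μ)
    (hμ' : IsProb μ') : ∑ e, (μ e - min (μ e) (μ' e)) = l1 μ μ' / 2 := by
  have h : ∀ e, μ e - min (μ e) (μ' e) = (|μ e - μ' e| + (μ e - μ' e)) / 2 := by
    intro e
    rcases le_total (μ e) (μ' e) with h | h
    · rw [min_eq_left h, abs_of_nonpos (sub_nonpos.2 h)]; ring
    · rw [min_eq_right h, abs_of_nonneg (sub_nonneg.2 h)]; ring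
  simp_rw [h, ← sum_div, sum_add_distrib, sum_sub_distrib, hμ.2, hμ'.2]
  simp [l1]

lemma abs_sum_mul_le_of_isProb {E : Type*} [Fintype E] {μ g : E → ℝ} (hμ : IsProb μ) {B : ℝ}
    (hg : ∀ e, |g e| ≤ B) : |∑ e, g e * μ e| ≤ B :=
  calc |∑ e, g e * μ e| ≤ ∑ e, |g e| * μ e := by
        refine (abs_sum_le_sum_abs _ _).trans_eq (sum_congr rfl fun e _ => ?_)
        rw [abs_mul, abs_of_nonneg (hμ.1 e)]
    _ ≤ ∑ e, B * μ e := sum_le_sum fun e _ => mul_le_mul_of_nonneg_right (hg e) (hμ.1 e)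
    _ = B := by rw [← mul_sum, hμ.2, mul_one]

/-- Two nonnegative weight vectors of equal mass `s` are coupled by the product weights
`a e * b f / s`, which is where the factor `s * M` comes from. -/
lemma l1_sum_mul_le_of_sum_eq {E F Y : Type*} [Fintype E] [Fintype F] [Fintype Y]
    {a : E → ℝ} {b : F → ℝ} (ha : ∀ e, 0 ≤ a e) (hb : ∀ f, 0 ≤ b f)
    (hab : ∑ e, a e = ∑ f, b f) {P : E → Y → ℝ} {P' : F → Y → ℝ} {M : ℝ}
    (hM : ∀ e f, l1 (P e) (P' f) ≤ M) :
    l1 (fun y => ∑ e, P e y * a e) (fun y => ∑ f, P' f y * b f) ≤ (∑ e, a e) * M := by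
  rcases (sum_nonneg fun e _ => ha e).eq_or_lt with hs0 | hs0
  · have ha0 : ∀ e, a e = 0 := fun e =>
      (sum_eq_zero_iff_of_nonneg fun e _ => ha e).1 hs0.symm e (mem_univ e)
    have hb0 : ∀ f, b f = 0 := fun f =>
      (sum_eq_zero_iff_of_nonneg fun f _ => hb f).1 (hab ▸ hs0.symm) f (mem_univ f)
    simp [l1, ha0, hb0]
  have hcouple : ∀ y, (∑ e, a e) * ((∑ e, P e y * a e) - ∑ f, P' f y * b f)
      = ∑ e, ∑ f, a e * b f * (P e y - P' f y) := by
    intro y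
    rw [mul_sub, mul_comm, hab, sum_mul_sum, ← hab, sum_mul_sum, ← sum_sub_distrib]
    exact sum_congr rfl fun e _ => by rw [← sum_sub_distrib]; exact sum_congr rfl fun f _ => by ring
  refine le_of_mul_le_mul_left ?_ hs0
  calc (∑ e, a e) * l1 (fun y => ∑ e, P e y * a e) (fun y => ∑ f, P' f y * b f)
      = ∑ y, |∑ e, ∑ f, a e * b f * (P e y - P' f y)| := by
        rw [l1, mul_sum]
        refine sum_congr rfl fun y _ => ?_
        rw [← hcouple, abs_mul, abs_of_pos hs0]
    _ ≤ ∑ y, ∑ e, ∑ f, a e * b f * |P e y - P' f y| := by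
        gcongr with y
        refine (abs_sum_le_sum_abs _ _).trans (sum_le_sum fun e _ => ?_)
        refine (abs_sum_le_sum_abs _ _).trans_eq (sum_congr rfl fun f _ => ?_)
        rw [abs_mul, abs_of_nonneg (mul_nonneg (ha e) (hb f))]
    _ = ∑ e, ∑ f, a e * b f * l1 (P e) (P' f) := by
        rw [sum_comm]
        refine sum_congr rfl fun e _ => ?_
        rw [sum_comm]
        simp_rw [l1, mul_sum]
    _ ≤ ∑ e, ∑ f, a e * b f * M := by
        gcongr with e _ f
        · exact mul_nonneg (ha e) (hb f)
        · exact hM e f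
    _ = (∑ e, a e) * ((∑ e, a e) * M) := by
        simp only [← sum_mul, ← mul_sum, ← hab]; ring

/-- The common mass `min μ μ'` stays in place and only the remaining mass `l1 μ μ' / 2`
is transported. -/
lemma l1_sum_mul_le_of_isProb {E Y : Type*} [Fintype E] [DecidableEq E] [Fintype Y]
    {μ μ' : E → ℝ} (hμ : IsProb μ) (hμ' : IsProb μ') {P P' : E → Y → ℝ} {D M : ℝ}
    (hM : 0 ≤ M) (h : ∀ e f, l1 (P e) (P' f) ≤ D + M * ind e f) :
    l1 (fun y => ∑ e, P e y * μ e) (fun y => ∑ e, P' e y * μ' e) ≤ D + l1 μ μ' / 2 * M := by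
  set m : E → ℝ := fun e => min (μ e) (μ' e)
  have hm : ∀ e, 0 ≤ m e := fun e => le_min (hμ.1 e) (hμ'.1 e)
  have hsa := hμ.sum_sub_min hμ'
  have hsb : ∑ e, (μ' e - m e) = l1 μ μ' / 2 := by
    simpa only [m, min_comm, l1_comm μ'] using hμ'.sum_sub_min hμ
  have hsm : ∑ e, m e = 1 - l1 μ μ' / 2 := by
    rw [← hsa, sum_sub_distrib, hμ.2]; ring
  have hsplit : ∀ y, (∑ e, P e y * μ e) - ∑ e, P' e y * μ' e
      = ∑ e, (P e y - P' e y) * m e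
        + ((∑ e, P e y * (μ e - m e)) - ∑ e, P' e y * (μ' e - m e)) := by
    intro y
    simp_rw [← sum_sub_distrib, ← sum_add_distrib]
    exact sum_congr rfl fun e _ => by ring
  have hstay : ∑ y, |∑ e, (P e y - P' e y) * m e| ≤ (1 - l1 μ μ' / 2) * D := by
    calc ∑ y, |∑ e, (P e y - P' e y) * m e| ≤ ∑ y, ∑ e, |P e y - P' e y| * m e := by
          gcongr with y
          refine (abs_sum_le_sum_abs _ _).trans_eq (sum_congr rfl fun e _ => ?_)
          rw [abs_mul, abs_of_nonneg (hm e)]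
      _ = ∑ e, l1 (P e) (P' e) * m e := by
          rw [sum_comm]; simp_rw [l1, sum_mul]
      _ ≤ ∑ e, D * m e := by
          gcongr with e
          · exact hm e
          · simpa using h e e
      _ = (1 - l1 μ μ' / 2) * D := by rw [← mul_sum, hsm, mul_comm]
  have hmove := l1_sum_mul_le_of_sum_eq (P := P) (P' := P') (M := D + M)
    (fun e => sub_nonneg.2 (min_le_left _ _)) (fun e => sub_nonneg.2 (min_le_right _ _))
    (hsa.trans hsb.symm) fun e f =>
      (h e f).trans (add_le_add_right (mul_le_of_le_one_right hM (ind_le_one e f)) D)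
  rw [hsa] at hmove
  calc l1 (fun y => ∑ e, P e y * μ e) (fun y => ∑ e, P' e y * μ' e)
      ≤ ∑ y, |∑ e, (P e y - P' e y) * m e|
        + l1 (fun y => ∑ e, P e y * (μ e - m e)) (fun y => ∑ e, P' e y * (μ' e - m e)) := by
        rw [l1, l1, ← sum_add_distrib]
        exact sum_le_sum fun y _ => (hsplit y).symm ▸ abs_add_le _ _
    _ ≤ (1 - l1 μ μ' / 2) * D + l1 μ μ' / 2 * (D + M) := add_le_add hstay hmove
    _ = D + l1 μ μ' / 2 * M := by ring

lemma abs_sum_mul_sub_sum_mul_le {E : Type*} [Fintype E] [DecidableEq E] {μ μ' : E → ℝ}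
    (hμ : IsProb μ) (hμ' : IsProb μ') {V : E → ℝ} {S : ℝ} (hS0 : 0 ≤ S)
    (hS : ∀ e f, |V e - V f| ≤ S) :
    |∑ e, V e * μ e - ∑ e, V e * μ' e| ≤ l1 μ μ' / 2 * S := by
  have h := l1_sum_mul_le_of_isProb (Y := Unit) (P := fun e _ => V e) (P' := fun e _ => V e)
    (D := 0) hμ hμ' hS0 fun e f => by
      by_cases hef : e = f
      · simp [hef, l1]
      · simpa [l1, ind, hef] using hS e f
  simpa [l1] using h

section RegularizedMax

variable {A : Type*} [Fintype A] {Ω : (A → ℝ) → ℝ}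

def payoff (Ω : (A → ℝ) → ℝ) (c u : A → ℝ) : ℝ :=
  ∑ a, c a * u a - Ω u

def IsRegMaximizer (Ω : (A → ℝ) → ℝ) (c g : A → ℝ) : Prop :=
  IsProb g ∧ ∀ u, IsProb u → payoff Ω c u ≤ payoff Ω c g

lemma IsProb.lineMap {u v : A → ℝ} (hu : IsProb u) (hv : IsProb v) {t : ℝ} (ht0 : 0 ≤ t)
    (ht1 : t ≤ 1) : IsProb fun a => (1 - t) * u a + t * v a := by
  refine ⟨fun a => add_nonneg (mul_nonneg (sub_nonneg.2 ht1) (hu.1 a)) (mul_nonneg ht0 (hv.1 a)),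
    ?_⟩
  rw [sum_add_distrib, ← mul_sum, ← mul_sum, hu.2, hv.2]; ring

lemma l1_lineMap_left (u v : A → ℝ) (t : ℝ) :
    l1 (fun a => (1 - t) * u a + t * v a) u = |t| * l1 v u := by
  rw [l1, l1, mul_sum]
  exact sum_congr rfl fun a _ => by rw [← abs_mul]; ring_nf

lemma l1_lineMap_right (u v : A → ℝ) (t : ℝ) :
    l1 (fun a => (1 - t) * u a + t * v a) v = |1 - t| * l1 u v := by
  rw [l1, l1, mul_sum]
  exact sum_congr rfl fun a _ => by rw [← abs_mul]; ring_nf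

variable {DΩ : (A → ℝ) → (A → ℝ)} {ρ : ℝ}

/-- The gradient terms of the two supporting inequalities at the point `w` of the segment
cancel, leaving the usual strong-convexity inequality along the segment. -/
lemma StrongConvex.lineMap_le (hΩ : StrongConvex Ω DΩ ρ) {u v : A → ℝ} (hu : IsProb u)
    (hv : IsProb v) {t : ℝ} (ht0 : 0 ≤ t) (ht1 : t ≤ 1) :
    Ω (fun a => (1 - t) * u a + t * v a) + ρ / 2 * (t * (1 - t)) * l1 u v ^ 2
      ≤ (1 - t) * Ω u + t * Ω v := by
  set w : A → ℝ := fun a => (1 - t) * u a + t * v a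
  have hw := hu.lineMap hv ht0 ht1
  have hwu := hΩ w u hw hu
  have hwv := hΩ w v hw hv
  rw [l1_lineMap_left, abs_of_nonneg ht0, l1_comm v] at hwu
  rw [l1_lineMap_right, abs_of_nonneg (sub_nonneg.2 ht1)] at hwv
  have hgrad : (1 - t) * ∑ a, DΩ w a * (u a - w a) + t * ∑ a, DΩ w a * (v a - w a) = 0 := by
    rw [mul_sum, mul_sum, ← sum_add_distrib]
    exact sum_eq_zero fun a _ => by simp only [w]; ring
  nlinarith [mul_le_mul_of_nonneg_left hwu (sub_nonneg.2 ht1), mul_le_mul_of_nonneg_left hwv ht0]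

/-- Moving a fraction `t` from `g` towards `u` gains at least `(1 - t) * ρ / 2 * l1 g u ^ 2`
per unit of `t`; letting `t → 0` gives the quadratic growth of the payoff around its maximizer. -/
lemma IsRegMaximizer.payoff_add_le (hΩ : StrongConvex Ω DΩ ρ) {c g : A → ℝ}
    (hg : IsRegMaximizer Ω c g) {u : A → ℝ} (hu : IsProb u) :
    payoff Ω c u + ρ / 2 * l1 g u ^ 2 ≤ payoff Ω c g := by
  have hsegment : ∀ t ∈ Set.Ioo (0 : ℝ) 1,
      (1 - t) * (ρ / 2 * l1 g u ^ 2) ≤ payoff Ω c g - payoff Ω c u := by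
    rintro t ⟨ht0, ht1⟩
    have hconv := hΩ.lineMap_le hg.1 hu ht0.le ht1.le
    have hmax := hg.2 _ (hg.1.lineMap hu ht0.le ht1.le)
    have hlin : ∑ a, c a * ((1 - t) * g a + t * u a)
        = (1 - t) * ∑ a, c a * g a + t * ∑ a, c a * u a := by
      rw [mul_sum, mul_sum, ← sum_add_distrib]
      exact sum_congr rfl fun a _ => by ring
    simp only [payoff, hlin] at hmax ⊢
    refine le_of_mul_le_mul_left ?_ ht0
    nlinarith
  have hlim : Filter.Tendsto (fun t : ℝ => (1 - t) * (ρ / 2 * l1 g u ^ 2))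
      (nhdsWithin 0 (Set.Ioi 0)) (nhds (ρ / 2 * l1 g u ^ 2)) := by
    refine tendsto_nhdsWithin_of_tendsto_nhds ?_
    convert ((continuous_const.sub continuous_id).mul continuous_const).tendsto
      (0 : ℝ) (f := fun t : ℝ => (1 - t) * (ρ / 2 * l1 g u ^ 2)) using 2
    simp
  have := le_of_tendsto hlim (Filter.eventually_of_mem (Ioo_mem_nhdsGT zero_lt_one) hsegment)
  linarith

lemma IsRegMaximizer.payoff_sub_le {c c' g g' : A → ℝ} (hg : IsProb g)
    (hg' : IsRegMaximizer Ω c' g') {B : ℝ} (hB : ∀ a, |c a - c' a| ≤ B) :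
    payoff Ω c g - payoff Ω c' g' ≤ B :=
  calc payoff Ω c g - payoff Ω c' g' ≤ payoff Ω c g - payoff Ω c' g := by
        linarith [hg'.2 g hg]
    _ = ∑ a, (c a - c' a) * g a := by
        simp only [payoff, sub_mul, sum_sub_distrib]; ring
    _ ≤ B := (le_abs_self _).trans (abs_sum_mul_le_of_isProb hg hB)

lemma IsRegMaximizer.mul_l1_le (hΩ : StrongConvex Ω DΩ ρ) {c c' g g' : A → ℝ}
    (hg : IsRegMaximizer Ω c g) (hg' : IsRegMaximizer Ω c' g') {B : ℝ}
    (hB : ∀ a, |c a - c' a| ≤ B) : ρ * l1 g g' ≤ B := by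
  have h := hg.payoff_add_le hΩ hg'.1
  have h' := hg'.payoff_add_le hΩ hg.1
  rw [l1_comm g'] at h'
  have hinner : ρ * l1 g g' ^ 2 ≤ ∑ a, (c a - c' a) * (g a - g' a) := by
    have e : ∑ a, (c a - c' a) * (g a - g' a)
        = (payoff Ω c g - payoff Ω c g') + (payoff Ω c' g' - payoff Ω c' g) := by
      simp only [payoff, sub_mul, mul_sub, sum_sub_distrib]; ring
    linarith
  have hcs : ∑ a, (c a - c' a) * (g a - g' a) ≤ B * l1 g g' := by
    rw [l1, mul_sum]
    exact sum_le_sum fun a _ => (le_abs_self _).trans <| by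
      rw [abs_mul]; exact mul_le_mul_of_nonneg_right (hB a) (abs_nonneg _)
  have := hg.1.nonempty
  have hB0 : 0 ≤ B := (abs_nonneg _).trans (hB (Classical.arbitrary A))
  rcases (l1_nonneg g g').eq_or_lt with h0 | h0
  · rw [← h0, mul_zero]; exact hB0
  · nlinarith

end RegularizedMax

lemma add_mul_div_one_sub {k : ℝ} (hk : k ≠ 1) (L : ℝ) : L + k * (L / (1 - k)) = L / (1 - k) := by
  field_simp [sub_ne_zero.2 hk.symm]
  ring

lemma Qmax_eq_of_forall_le {X A : Type*} [Fintype A] {Q : X → (A → ℝ) → ℝ} {y : X} {g : A → ℝ} (hg : IsProb g)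
    (hmax : ∀ u, IsProb u → Q y u ≤ Q y g) : Qmax Q y = Q y g := by
  have : Nonempty {w : A → ℝ // IsProb w} := ⟨⟨g, hg⟩⟩
  exact le_antisymm (ciSup_le fun w => hmax w.1 w.2)
    (le_ciSup (f := fun w : {w : A → ℝ // IsProb w} => Q y w.1)
      ⟨Q y g, by rintro _ ⟨w, rfl⟩; exact hmax w.1 w.2⟩ ⟨g, hg⟩)

section Bellman

variable {X A : Type*} [Fintype X] [Fintype A]
  {r : X → A → (X → ℝ) → ℝ} {p : X → A → (X → ℝ) → X → ℝ} {Ω : (A → ℝ) → ℝ} {β : ℝ}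

def qValue (r : X → A → (X → ℝ) → ℝ) (p : X → A → (X → ℝ) → X → ℝ) (β : ℝ) (μ V : X → ℝ)
    (x : X) (a : A) : ℝ :=
  r x a μ + β * ∑ y, V y * p x a μ y

lemma Lbell_eq_payoff (μ : X → ℝ) (Q : X → (A → ℝ) → ℝ) (x : X) (u : A → ℝ) :
    Lbell r p Ω β μ Q x u = payoff Ω (qValue r p β μ (Qmax Q) x) u := by
  simp only [Lbell, payoff, qValue, add_mul, sum_add_distrib, mul_sum, sum_mul, mul_assoc]
  rw [sum_comm]
  ring

/-- The regularized Bellman optimality equation: `V` is the value and `g` an optimal policy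
against the population `μ`. -/
def IsRegOptimal (r : X → A → (X → ℝ) → ℝ) (p : X → A → (X → ℝ) → X → ℝ)
    (Ω : (A → ℝ) → ℝ) (β : ℝ) (μ V : X → ℝ) (g : X → A → ℝ) : Prop :=
  ∀ x, IsRegMaximizer Ω (qValue r p β μ V x) (g x) ∧ V x = payoff Ω (qValue r p β μ V x) (g x)

lemma BddFixedPoint.isRegOptimal {μ : X → ℝ} {Q : X → (A → ℝ) → ℝ}
    (hQ : BddFixedPoint r p Ω β μ Q) {g : X → A → ℝ} (hg : ∀ x, IsProb (g x))
    (hmax : ∀ x u, IsProb u → Q x u ≤ Q x (g x)) : IsRegOptimal r p Ω β μ (Qmax Q) g := by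
  have hpayoff : ∀ x u, IsProb u → Q x u = payoff Ω (qValue r p β μ (Qmax Q) x) u :=
    fun x u hu => (hQ.2 x u hu).trans (Lbell_eq_payoff μ Q x u)
  refine fun x => ⟨⟨hg x, fun u hu => ?_⟩, ?_⟩
  · rw [← hpayoff x u hu, ← hpayoff x (g x) (hg x)]
    exact hmax x u hu
  · rw [Qmax_eq_of_forall_le (hg x) (hmax x), hpayoff x (g x) (hg x)]

lemma IsRegOptimal.sub_le {μ μ' V V' : X → ℝ} {g g' : X → A → ℝ}
    (h : IsRegOptimal r p Ω β μ V g) (h' : IsRegOptimal r p Ω β μ' V' g') {x x' : X} {B : ℝ}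
    (hB : ∀ a, |qValue r p β μ V x a - qValue r p β μ' V' x' a| ≤ B) : V x - V' x' ≤ B := by
  rw [(h x).2, (h' x').2]
  exact (h' x').1.payoff_sub_le (h x).1.1 hB

variable [DecidableEq X] [DecidableEq A] {L1 K1 : ℝ}

/-- The continuation term splits into a change of value, weighted by `p(·|x,a,μ)`, and a
change of kernel, which only sees the span `S` of `V'`. -/
lemma abs_qValue_sub_le (hr : RewardLip r L1) (hp : KernelLip p K1) (hp_prob : IsKernel p)
    (hβ : 0 ≤ β) {μ μ' : X → ℝ} (hμ : IsProb μ) (hμ' : IsProb μ') {V V' : X → ℝ} {D S : ℝ}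
    (hD : ∀ y, |V y - V' y| ≤ D) (hS : ∀ y y', |V' y - V' y'| ≤ S) (x x' : X) (a : A) :
    |qValue r p β μ V x a - qValue r p β μ' V' x' a|
      ≤ (L1 + β * K1 / 2 * S) * (ind x x' + l1 μ μ') + β * D := by
  have hS0 : 0 ≤ S := (abs_nonneg _).trans (hS x x)
  have hsplit : qValue r p β μ V x a - qValue r p β μ' V' x' a
      = (r x a μ - r x' a μ') + β * (∑ y, (V y - V' y) * p x a μ y
        + (∑ y, V' y * p x a μ y - ∑ y, V' y * p x' a μ' y)) := by
    simp only [qValue, sub_mul, sum_sub_distrib]; ring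
  have hreward : |r x a μ - r x' a μ'| ≤ L1 * (ind x x' + l1 μ μ') := by
    simpa using hr x x' a a μ μ' hμ hμ'
  have hkernel : l1 (p x a μ) (p x' a μ') ≤ K1 * (ind x x' + l1 μ μ') := by
    simpa using hp x x' a a μ μ' hμ hμ'
  have hvalue : |∑ y, (V y - V' y) * p x a μ y| ≤ D :=
    abs_sum_mul_le_of_isProb (hp_prob x a μ hμ) hD
  have htransport : |∑ y, V' y * p x a μ y - ∑ y, V' y * p x' a μ' y|
      ≤ K1 * (ind x x' + l1 μ μ') / 2 * S :=
    (abs_sum_mul_sub_sum_mul_le (hp_prob x a μ hμ) (hp_prob x' a μ' hμ') hS0 hS).trans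
      (by gcongr)
  rw [hsplit]
  calc _ ≤ |r x a μ - r x' a μ'| + β * (|∑ y, (V y - V' y) * p x a μ y|
          + |∑ y, V' y * p x a μ y - ∑ y, V' y * p x' a μ' y|) := by
        refine (abs_add_le _ _).trans ?_
        rw [abs_mul, abs_of_nonneg hβ]
        gcongr
        exact abs_add_le _ _
    _ ≤ L1 * (ind x x' + l1 μ μ') + β * (D + K1 * (ind x x' + l1 μ μ') / 2 * S) := by
        gcongr
    _ = _ := by ring

/-- Comparing the Bellman equation at a pair of states realizing the span `M` of `V` gives
`M ≤ L1 + β K1 / 2 * M`. -/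
lemma IsRegOptimal.abs_sub_le {μ V : X → ℝ} {g : X → A → ℝ} (h : IsRegOptimal r p Ω β μ V g)
    (hμ : IsProb μ) (hr : RewardLip r L1) (hp : KernelLip p K1) (hp_prob : IsKernel p)
    (hL1 : 0 ≤ L1) (hK1 : 0 ≤ K1) (hβ : 0 ≤ β) (hβK : β * K1 / 2 < 1) (y y' : X) :
    |V y - V y'| ≤ L1 / (1 - β * K1 / 2) := by
  obtain ⟨⟨z, z'⟩, -, hmax⟩ := exists_max_image (univ ×ˢ univ) (fun z => V z.1 - V z.2)
    ⟨(y, y'), mem_product.2 ⟨mem_univ y, mem_univ y'⟩⟩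
  set M := V z - V z'
  have hspan : ∀ w w', |V w - V w'| ≤ M := fun w w' =>
    abs_sub_le_iff.2 ⟨hmax (w, w') (by simp), hmax (w', w) (by simp)⟩
  have hM0 : 0 ≤ M := (abs_nonneg _).trans (hspan z z)
  have hB := abs_qValue_sub_le (V := V) (V' := V) (D := 0) hr hp hp_prob hβ hμ hμ (by simp) hspan z z'
  have hM : M ≤ L1 + β * K1 / 2 * M :=
    calc M ≤ (L1 + β * K1 / 2 * M) * (ind z z' + l1 μ μ) + β * 0 := h.sub_le h hB
      _ ≤ L1 + β * K1 / 2 * M := by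
        rw [l1_self, add_zero, mul_zero, add_zero]
        exact mul_le_of_le_one_right (by positivity) (ind_le_one z z')
  rw [le_div_iff₀ (by linarith)]
  nlinarith [hspan y y']

/-- A sup-norm bound `D` on `V - V'` feeds back as `D ≤ Q_Lip * l1 μ μ' + β * D`. -/
lemma IsRegOptimal.abs_sub_le_mul_l1 {μ μ' V V' : X → ℝ} {g g' : X → A → ℝ}
    (h : IsRegOptimal r p Ω β μ V g) (h' : IsRegOptimal r p Ω β μ' V' g')
    (hμ : IsProb μ) (hμ' : IsProb μ') (hr : RewardLip r L1) (hp : KernelLip p K1)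
    (hp_prob : IsKernel p) (hL1 : 0 ≤ L1) (hK1 : 0 ≤ K1) (hβ0 : 0 ≤ β) (hβ1 : β < 1)
    (hβK : β * K1 / 2 < 1) (y : X) :
    |V y - V' y| ≤ L1 / (1 - β * K1 / 2) / (1 - β) * l1 μ μ' := by
  obtain ⟨z, -, hmax⟩ := exists_max_image univ (fun z => |V z - V' z|) ⟨y, mem_univ y⟩
  set D := |V z - V' z|
  have hB := abs_qValue_sub_le hr hp hp_prob hβ0 hμ hμ' (fun w => hmax w (mem_univ w))
    (h'.abs_sub_le hμ' hr hp hp_prob hL1 hK1 hβ0 hβK) z z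
  simp only [ind_self, zero_add, add_mul_div_one_sub hβK.ne] at hB
  have hD : D ≤ L1 / (1 - β * K1 / 2) * l1 μ μ' + β * D :=
    abs_sub_le_iff.2 ⟨h.sub_le h' hB, h'.sub_le h fun a => abs_sub_comm (α := ℝ) _ _ ▸ hB a⟩
  rw [div_mul_eq_mul_div, le_div_iff₀ (by linarith)]
  nlinarith [hmax y (mem_univ y)]

lemma IsRegOptimal.mul_l1_le {DΩ : (A → ℝ) → (A → ℝ)} {ρ : ℝ} {μ μ' V V' : X → ℝ}
    {g g' : X → A → ℝ} (h : IsRegOptimal r p Ω β μ V g) (h' : IsRegOptimal r p Ω β μ' V' g')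
    (hΩ : StrongConvex Ω DΩ ρ) (hμ : IsProb μ) (hμ' : IsProb μ') (hr : RewardLip r L1)
    (hp : KernelLip p K1) (hp_prob : IsKernel p) (hL1 : 0 ≤ L1) (hK1 : 0 ≤ K1) (hβ0 : 0 ≤ β)
    (hβ1 : β < 1) (hβK : β * K1 / 2 < 1) (x x' : X) :
    ρ * l1 (g x) (g' x') ≤ L1 / (1 - β * K1 / 2) / (1 - β) * (ind x x' + l1 μ μ') := by
  have hB := abs_qValue_sub_le hr hp hp_prob hβ0 hμ hμ'
    (h.abs_sub_le_mul_l1 h' hμ hμ' hr hp hp_prob hL1 hK1 hβ0 hβ1 hβK)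
    (h'.abs_sub_le hμ' hr hp hp_prob hL1 hK1 hβ0 hβK) x x'
  rw [add_mul_div_one_sub hβK.ne] at hB
  refine (h x).1.mul_l1_le hΩ (h' x').1 fun a => (hB a).trans ?_
  have hKH1 : 0 ≤ L1 / (1 - β * K1 / 2) / (1 - β) := by
    have : 0 < 1 - β * K1 / 2 := by linarith
    have : 0 < 1 - β := by linarith
    positivity
  have hfix := add_mul_div_one_sub hβ1.ne (L1 / (1 - β * K1 / 2))
  generalize L1 / (1 - β * K1 / 2) / (1 - β) = KH1 at hfix hKH1 ⊢
  generalize L1 / (1 - β * K1 / 2) = QLip at hfix ⊢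
  calc QLip * (ind x x' + l1 μ μ') + β * (KH1 * l1 μ μ')
      ≤ QLip * (ind x x' + l1 μ μ') + β * KH1 * (ind x x' + l1 μ μ') := by
        nlinarith [mul_nonneg (mul_nonneg hβ0 hKH1) (ind_nonneg x x')]
    _ = KH1 * (ind x x' + l1 μ μ') := by linear_combination (ind x x' + l1 μ μ') * hfix

lemma KernelLip.l1_sum_mul_le (hp : KernelLip p K1) (hK1 : 0 ≤ K1) {μ μ' : X → ℝ}
    (hμ : IsProb μ) (hμ' : IsProb μ') {u u' : A → ℝ} (hu : IsProb u) (hu' : IsProb u')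
    (x x' : X) :
    l1 (fun y => ∑ a, p x a μ y * u a) (fun y => ∑ a, p x' a μ' y * u' a)
      ≤ K1 * (ind x x' + l1 μ μ') + K1 * l1 u u' := by
  have := l1_sum_mul_le_of_isProb (D := K1 * (ind x x' + l1 μ μ')) hu hu'
    (by positivity : 0 ≤ 2 * K1) fun a a' => (hp x x' a a' μ μ' hμ hμ').trans_eq (by ring)
  linarith

end Bellman

theorem statement10_general {X A : Type*} [Fintype X] [Fintype A]
    [DecidableEq X] [DecidableEq A]
    (r : X → A → (X → ℝ) → ℝ) (p : X → A → (X → ℝ) → X → ℝ)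
    (L1 K1 : ℝ) (hL1 : 0 ≤ L1) (hK1 : 0 ≤ K1)
    (hr : RewardLip r L1)
    (hp_prob : IsKernel p) (hp : KernelLip p K1)
    (Ω : (A → ℝ) → ℝ) (DΩ : (A → ℝ) → (A → ℝ)) (ρ : ℝ) (hρ : 0 < ρ)
    (hΩ : StrongConvex Ω DΩ ρ)
    (β : ℝ) (hβ0 : 0 < β) (hβ1 : β < 1) (hβK : β * K1 / 2 < 1)
    (Qs : (X → ℝ) → X → (A → ℝ) → ℝ)
    (hQs : ∀ μ, IsProb μ → BddFixedPoint r p Ω β μ (Qs μ))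
    (f : (X → ℝ) → X → A → ℝ)
    (hf : ∀ μ, IsProb μ → ∀ x, IsProb (f μ x))
    (hfmax : ∀ μ, IsProb μ → ∀ x u, IsProb u → Qs μ x u ≤ Qs μ x (f μ x)) :
    ∀ μ μ', IsProb μ → IsProb μ' →
      l1 (fun y => ∑ x, (∑ a, p x a μ y * f μ x a) * μ x)
         (fun y => ∑ x, (∑ a, p x a μ' y * f μ' x a) * μ' x) ≤
        (3 * K1 / 2) * (1 + ((L1 / (1 - β * K1 / 2)) / (1 - β)) / ρ) * l1 μ μ' := by
  intro μ μ' hμ hμ'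
  have hopt : ∀ ν, IsProb ν → IsRegOptimal r p Ω β ν (Qmax (Qs ν)) (f ν) := fun ν hν =>
    (hQs ν hν).isRegOptimal (hf ν hν) (hfmax ν hν)
  set KH1 := L1 / (1 - β * K1 / 2) / (1 - β)
  have hKH1 : 0 ≤ KH1 := by
    have : 0 < 1 - β * K1 / 2 := by linarith
    have : 0 < 1 - β := by linarith
    positivity
  have hpolicy : ∀ x x', l1 (f μ x) (f μ' x') ≤ KH1 / ρ * (ind x x' + l1 μ μ') := fun x x' => by
    rw [div_mul_eq_mul_div, le_div_iff₀' hρ]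
    exact (hopt μ hμ).mul_l1_le (hopt μ' hμ') hΩ hμ hμ' hr hp hp_prob hL1 hK1 hβ0.le hβ1 hβK x x'
  have hstate : ∀ x x', l1 (fun y => ∑ a, p x a μ y * f μ x a)
      (fun y => ∑ a, p x' a μ' y * f μ' x' a)
        ≤ K1 * (1 + KH1 / ρ) * l1 μ μ' + K1 * (1 + KH1 / ρ) * ind x x' := fun x x' =>
    calc _ ≤ K1 * (ind x x' + l1 μ μ') + K1 * l1 (f μ x) (f μ' x') :=
          hp.l1_sum_mul_le hK1 hμ hμ' (hf μ hμ x) (hf μ' hμ' x') x x'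
      _ ≤ K1 * (ind x x' + l1 μ μ') + K1 * (KH1 / ρ * (ind x x' + l1 μ μ')) := by
          gcongr; exact hpolicy x x'
      _ = _ := by ring
  calc _ ≤ K1 * (1 + KH1 / ρ) * l1 μ μ' + l1 μ μ' / 2 * (K1 * (1 + KH1 / ρ)) :=
        l1_sum_mul_le_of_isProb hμ hμ' (by positivity) hstate
    _ = _ := by ring

/-- Proposition 4: the mean-field equilibrium operator `H`
satisfies `‖H(μ) - H(μ̂)‖₁ ≤ K_H ‖μ - μ̂‖₁` with
`K_H = (3K1/2)(1 + K_{H1}/ρ)`; in particular it is a contraction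
whenever `K_H < 1`. -/
theorem statement10 {X A : Type*} [Fintype X] [Fintype A] [Nonempty X] [Nonempty A]
    [DecidableEq X] [DecidableEq A]
    (r : X → A → (X → ℝ) → ℝ) (p : X → A → (X → ℝ) → X → ℝ)
    (L1 K1 : ℝ) (hL1 : 0 ≤ L1) (hK1 : 0 ≤ K1)
    (hr_nonneg : RewardNonneg r) (hr : RewardLip r L1)
    (hp_prob : IsKernel p) (hp : KernelLip p K1)
    (Ω : (A → ℝ) → ℝ) (DΩ : (A → ℝ) → (A → ℝ)) (ρ : ℝ) (hρ : 0 < ρ)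
    (hΩ : StrongConvex Ω DΩ ρ)
    (β : ℝ) (hβ0 : 0 < β) (hβ1 : β < 1) (hβK : β * K1 / 2 < 1)
    (Qs : (X → ℝ) → X → (A → ℝ) → ℝ)
    (hQs : ∀ μ, IsProb μ → BddFixedPoint r p Ω β μ (Qs μ))
    (f : (X → ℝ) → X → A → ℝ)
    (hf : ∀ μ, IsProb μ → ∀ x, IsProb (f μ x))
    (hfmax : ∀ μ, IsProb μ → ∀ x u, IsProb u → Qs μ x u ≤ Qs μ x (f μ x)) :
    ∀ μ μ', IsProb μ → IsProb μ' →
      l1 (fun y => ∑ x, (∑ a, p x a μ y * f μ x a) * μ x)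
         (fun y => ∑ x, (∑ a, p x a μ' y * f μ' x a) * μ' x) ≤
        (3 * K1 / 2) * (1 + ((L1 / (1 - β * K1 / 2)) / (1 - β)) / ρ) * l1 μ μ' :=
  statement10_general r p L1 K1 hL1 hK1 hr hp_prob hp Ω DΩ ρ hρ hΩ β hβ0 hβ1 hβK Qs hQs f hf hfmax

end MFG
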